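/- arXiv:1411.5121 — 7 statements merged into one kernel-verified Lean document; each statement's English description precedes it below -/
import Mathlib

section
/- Let f be a real number with 0 < f < 1/3, and let π : ℝ → ℝ be the rlm_dpl1_extreme_3a function. Then π is an extreme minimal valid function: π is a minimal valid function with parameter f, and whenever π = (π¹ + π²)/2 with π¹, π² minimal valid functions with parameter f, one has π¹ = π² = π. -/
/-- A minimal valid function for the Gomory–Johnson infinite group problem
with parameter `f`. -/
def MinimalValid (f : ℝ) (π : ℝ → ℝ) : Prop :=
  (∀ x, 0 ≤ π x) ∧ π 0 = 0 ∧ (∀ x, π (x + 1) = π x) ∧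
  (∀ x y, π (x + y) ≤ π x + π y) ∧ (∀ x, π x + π (f - x) = 1)

/-- The `rlm_dpl1_extreme_3a` function, periodic with period 1, defined via the
fractional part. -/
noncomputable def rlmDpl1Extreme3a (f : ℝ) : ℝ → ℝ := fun x =>
  let t := Int.fract x
  if t ≤ f then t / f
  else if t < (1 + f) / 2 then 2 * t / (1 + 2 * f)
  else if t = (1 + f) / 2 then 1 / 2
  else (2 * t - 1) / (1 + 2 * f)

/-!
On `[0, 1)` the function is `π t = (2 f t + Ψ t) / (f (1 + 2 f))`, where `Ψ = rlmDeviation f` takes the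
values `t`, `0`, `-f/2`, `-f` on `[0, f]`, `(f, (1+f)/2)`, `{(1+f)/2}`, `((1+f)/2, 1)`. The linear part
is additive up to the carry `2 f` when `u + v` passes `1`, so subadditivity, symmetry and the additivity
relations of `π` all reduce to linear inequalities between values of `Ψ`.

If `π = (π₁ + π₂) / 2` with `π₁`, `π₂` subadditive, each `πᵢ` is additive wherever `π` is, and such a
minimal valid `g` is pinned down piece by piece. On `[0, f]` it is additive and bounded, hence linear
(a local Cauchy equation), and `g f = 1`. On `(f, (1+f)/2)`, additivity of `π` across pieces, read
through the symmetry `g x + g (1 + f - x) = 1`, gives `g u + g v + g w = 2` whenever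
`u + v + w = 1 + 2 f`, which makes `g` affine there, and `g (a + b) = g a + g b` fixes the slope. The
value at `(1+f)/2` and the last piece follow by symmetry.
-/

open Function Set

theorem Function.Periodic.apply_eq_of_sub_eq_intCast {β : Type*} {g : ℝ → β} (h : Periodic g 1)
    {x y : ℝ} (z : ℤ) (hxy : x - y = z) : g x = g y := by
  rw [show x = y + z * 1 by linarith]
  exact h.int_mul z y

theorem Function.Periodic.apply_fract {β : Type*} {g : ℝ → β} (h : Periodic g 1) (x : ℝ) :
    g (Int.fract x) = g x :=
  h.apply_eq_of_sub_eq_intCast (-⌊x⌋) (by rw [Int.fract]; push_cast; ring)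

theorem Function.Periodic.apply_fract_add_fract {β : Type*} {g : ℝ → β} (h : Periodic g 1)
    (x y : ℝ) : g (Int.fract x + Int.fract y) = g (x + y) :=
  h.apply_eq_of_sub_eq_intCast (-⌊x⌋ - ⌊y⌋) (by rw [Int.fract, Int.fract]; push_cast; ring)

theorem Function.Periodic.subadditive_of_mem_Ico {g : ℝ → ℝ} (h : Periodic g 1)
    (hsub : ∀ u v, 0 ≤ u → u < 1 → 0 ≤ v → v < 1 → g (u + v) ≤ g u + g v) (x y : ℝ) :
    g (x + y) ≤ g x + g y := by
  rw [← h.apply_fract_add_fract, ← h.apply_fract x, ← h.apply_fract y]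
  exact hsub _ _ (Int.fract_nonneg x) (Int.fract_lt_one x) (Int.fract_nonneg y) (Int.fract_lt_one y)

theorem map_natCast_mul_of_additive {a : ℝ} {e : ℝ → ℝ}
    (hadd : ∀ x y, 0 ≤ x → 0 ≤ y → x + y < a → e (x + y) = e x + e y) (n : ℕ) {x : ℝ}
    (hx : 0 ≤ x) (hnx : n * x < a) : e (n * x) = n * e x := by
  induction n with
  | zero => simpa using hadd 0 0 le_rfl le_rfl (by simpa using hnx)
  | succ n ih =>
    push_cast at hnx ⊢
    rw [add_one_mul] at hnx ⊢
    rw [hadd _ _ (by positivity) hx hnx, ih (by linarith), add_one_mul]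

theorem exists_eq_mul_of_additive_of_abs_le {a M : ℝ} {e : ℝ → ℝ}
    (hadd : ∀ x y, 0 ≤ x → 0 ≤ y → x + y < a → e (x + y) = e x + e y)
    (hbd : ∀ x, 0 ≤ x → x < a → |e x| ≤ M) :
    ∃ c, ∀ x, 0 ≤ x → x < a → e x = c * x := by
  set x₀ := a / 2 with hx₀
  set c := e x₀ / x₀ with hc
  refine ⟨c, fun x hx hxa => ?_⟩
  have hx₀pos : 0 < x₀ := by linarith
  -- `e` is exactly linear on the multiples of `δ = x₀ / (n + 1)`, and `x` is such a multiple up to `δ`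
  have hbound : ∀ n : ℕ, (n + 1) * |e x - c * x| ≤ M + |c| * x₀ := by
    intro n
    have hn : (0 : ℝ) < n + 1 := by positivity
    obtain ⟨δ, hδ, hnδ⟩ : ∃ δ, 0 < δ ∧ (n + 1) * δ = x₀ :=
      ⟨x₀ / (n + 1), by positivity, by field_simp⟩
    have heδ : e δ = c * δ := by
      have := map_natCast_mul_of_additive hadd (n + 1) hδ.le (by push_cast; linarith)
      push_cast at this
      rw [hc, ← hnδ, this]
      field_simp
    obtain ⟨m, hmδ, hxm⟩ : ∃ m : ℕ, m * δ ≤ x ∧ x < (m + 1) * δ :=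
      ⟨⌊x / δ⌋₊, (le_div_iff₀ hδ).1 (Nat.floor_le (by positivity)),
        (div_lt_iff₀ hδ).1 (Nat.lt_floor_add_one _)⟩
    obtain ⟨r, rfl⟩ : ∃ r, x = m * δ + r := ⟨x - m * δ, by ring⟩
    have hr0 : 0 ≤ r := by linarith
    have hnr : (n + 1) * r ≤ x₀ := by nlinarith
    have hsplit : e (m * δ + r) - c * (m * δ + r) = e r - c * r := by
      rw [hadd _ _ (by positivity) hr0 hxa,
        map_natCast_mul_of_additive hadd m hδ.le (by linarith), heδ]
      ring
    have her : (n + 1) * |e r| ≤ M := by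
      have hnr' := map_natCast_mul_of_additive hadd (n + 1) hr0 (by push_cast; linarith)
      have := hbd ((n + 1 : ℕ) * r) (by positivity) (by push_cast; linarith)
      push_cast at hnr' this
      rwa [hnr', abs_mul, abs_of_pos hn] at this
    calc (n + 1) * |e (m * δ + r) - c * (m * δ + r)| = (n + 1) * |e r - c * r| := by rw [hsplit]
      _ ≤ (n + 1) * |e r| + |c| * ((n + 1) * r) := by
        have := abs_sub (e r) (c * r)
        rw [abs_mul, abs_of_nonneg hr0] at this
        nlinarith
      _ ≤ M + |c| * x₀ := by gcongr
  by_contra hne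
  have hpos : 0 < |e x - c * x| := abs_pos.2 (sub_ne_zero.2 hne)
  obtain ⟨n, hn⟩ := exists_nat_gt ((M + |c| * x₀) / |e x - c * x|)
  rw [div_lt_iff₀ hpos] at hn
  nlinarith [hbound n]

theorem add_eq_of_eq_avg_of_subadditive {π π₁ π₂ : ℝ → ℝ}
    (h₁ : ∀ x y, π₁ (x + y) ≤ π₁ x + π₁ y) (h₂ : ∀ x y, π₂ (x + y) ≤ π₂ x + π₂ y)
    (havg : ∀ x, π x = (π₁ x + π₂ x) / 2) {x y : ℝ} (h : π x + π y = π (x + y)) :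
    π₁ x + π₁ y = π₁ (x + y) := by
  rw [havg, havg, havg] at h
  linarith [h₁ x y, h₂ x y]

-- The midpoint is tested last, after the strict `(1 + f) / 2 < t`, so that every branch is cut out
-- by linear inequalities alone.
noncomputable def rlmDeviation (f t : ℝ) : ℝ :=
  if t ≤ f then t else if t < (1 + f) / 2 then 0 else if (1 + f) / 2 < t then -f else -(f / 2)

section rlmDpl1Extreme3a

variable {f : ℝ}

theorem rlmDpl1Extreme3a_periodic (f : ℝ) : Periodic (rlmDpl1Extreme3a f) 1 := fun x => by
  simp only [rlmDpl1Extreme3a, Int.fract_add_one]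

theorem rlmDpl1Extreme3a_eq (hf0 : 0 < f) {t : ℝ} (ht0 : 0 ≤ t) (ht1 : t < 1) :
    rlmDpl1Extreme3a f t = (2 * f * t + rlmDeviation f t) / (f * (1 + 2 * f)) := by
  simp only [rlmDpl1Extreme3a, rlmDeviation, Int.fract_eq_self.2 ⟨ht0, ht1⟩]
  split_ifs with h₁ h₂ h₃ h₄ <;> first
    | (exfalso; linarith)
    | exact absurd (by linarith) h₃
    | (subst h₃; field_simp; ring)
    | (field_simp; ring)

theorem rlmDpl1Extreme3a_add_sub_of_add_lt_one (hf0 : 0 < f) {u v : ℝ} (hu : 0 ≤ u) (hv : 0 ≤ v)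
    (huv : u + v < 1) :
    rlmDpl1Extreme3a f u + rlmDpl1Extreme3a f v - rlmDpl1Extreme3a f (u + v) =
      (rlmDeviation f u + rlmDeviation f v - rlmDeviation f (u + v)) / (f * (1 + 2 * f)) := by
  rw [rlmDpl1Extreme3a_eq hf0 hu (by linarith), rlmDpl1Extreme3a_eq hf0 hv (by linarith),
    rlmDpl1Extreme3a_eq hf0 (by linarith) huv]
  ring

theorem rlmDpl1Extreme3a_add_sub_of_one_le_add (hf0 : 0 < f) {u v : ℝ} (hu : u < 1) (hv : v < 1)
    (huv : 1 ≤ u + v) :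
    rlmDpl1Extreme3a f u + rlmDpl1Extreme3a f v - rlmDpl1Extreme3a f (u + v) =
      (rlmDeviation f u + rlmDeviation f v + 2 * f - rlmDeviation f (u + v - 1)) /
        (f * (1 + 2 * f)) := by
  rw [← (rlmDpl1Extreme3a_periodic f).sub_eq (u + v), rlmDpl1Extreme3a_eq hf0 (by linarith) hu,
    rlmDpl1Extreme3a_eq hf0 (by linarith) hv, rlmDpl1Extreme3a_eq hf0 (by linarith) (by linarith)]
  field_simp
  ring

theorem rlmDpl1Extreme3a_add_le (hf0 : 0 < f) (x y : ℝ) :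
    rlmDpl1Extreme3a f (x + y) ≤ rlmDpl1Extreme3a f x + rlmDpl1Extreme3a f y := by
  refine (rlmDpl1Extreme3a_periodic f).subadditive_of_mem_Ico (fun u v hu0 hu1 hv0 hv1 => ?_) x y
  rw [← sub_nonneg]
  rcases lt_or_ge (u + v) 1 with huv | huv
  · rw [rlmDpl1Extreme3a_add_sub_of_add_lt_one hf0 hu0 hv0 huv]
    refine div_nonneg ?_ (by positivity)
    simp only [rlmDeviation]
    split_ifs <;> linarith
  · rw [rlmDpl1Extreme3a_add_sub_of_one_le_add hf0 hu1 hv1 huv]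
    refine div_nonneg ?_ (by positivity)
    simp only [rlmDeviation]
    split_ifs <;> linarith

theorem rlmDpl1Extreme3a_nonneg (hf0 : 0 < f) (x : ℝ) : 0 ≤ rlmDpl1Extreme3a f x := by
  rw [← (rlmDpl1Extreme3a_periodic f).apply_fract,
    rlmDpl1Extreme3a_eq hf0 (Int.fract_nonneg x) (Int.fract_lt_one x)]
  have hx := Int.fract_nonneg x
  refine div_nonneg ?_ (by positivity)
  simp only [rlmDeviation]
  split_ifs <;> nlinarith

theorem rlmDpl1Extreme3a_zero (hf0 : 0 < f) : rlmDpl1Extreme3a f 0 = 0 := by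
  simp [rlmDpl1Extreme3a, hf0.le]

theorem rlmDpl1Extreme3a_add_apply_sub (hf0 : 0 < f) (hf1 : f < 1) (x : ℝ) :
    rlmDpl1Extreme3a f x + rlmDpl1Extreme3a f (f - x) = 1 := by
  have hπ := rlmDpl1Extreme3a_periodic f
  have hd : f * (1 + 2 * f) ≠ 0 := by positivity
  have hfx : rlmDpl1Extreme3a f (f - x) = rlmDpl1Extreme3a f (f - Int.fract x) :=
    hπ.apply_eq_of_sub_eq_intCast (-⌊x⌋) (by rw [Int.fract]; push_cast; ring)
  rw [← hπ.apply_fract x, hfx]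
  have hu0 := Int.fract_nonneg x
  have hu1 := Int.fract_lt_one x
  rcases le_or_gt (Int.fract x) f with h | h
  · rw [rlmDpl1Extreme3a_eq hf0 hu0 hu1, rlmDpl1Extreme3a_eq hf0 (by linarith) (by linarith),
      ← add_div, div_eq_one_iff_eq hd]
    simp only [rlmDeviation]
    split_ifs <;> linarith
  · rw [← hπ (f - Int.fract x), rlmDpl1Extreme3a_eq hf0 hu0 hu1,
      rlmDpl1Extreme3a_eq hf0 (by linarith) (by linarith), ← add_div, div_eq_one_iff_eq hd]
    simp only [rlmDeviation]
    split_ifs <;> linarith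

theorem rlmDpl1Extreme3a_minimalValid (hf0 : 0 < f) (hf1 : f < 1) :
    MinimalValid f (rlmDpl1Extreme3a f) :=
  ⟨rlmDpl1Extreme3a_nonneg hf0, rlmDpl1Extreme3a_zero hf0, rlmDpl1Extreme3a_periodic f,
    rlmDpl1Extreme3a_add_le hf0, rlmDpl1Extreme3a_add_apply_sub hf0 hf1⟩

theorem rlmDpl1Extreme3a_add_eq_of_add_le (hf0 : 0 < f) (hf1 : f < 1) {u v : ℝ} (hu : 0 ≤ u)
    (hv : 0 ≤ v) (huv : u + v ≤ f) :
    rlmDpl1Extreme3a f u + rlmDpl1Extreme3a f v = rlmDpl1Extreme3a f (u + v) := by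
  rw [← sub_eq_zero, rlmDpl1Extreme3a_add_sub_of_add_lt_one hf0 hu hv (by linarith),
    div_eq_zero_iff]
  left
  simp only [rlmDeviation]
  split_ifs <;> linarith

theorem rlmDpl1Extreme3a_add_eq_of_lt_of_half_lt (hf0 : 0 < f) {u v : ℝ} (hu : f < u)
    (hv : (1 + f) / 2 < v) (huv : u + v < 1) :
    rlmDpl1Extreme3a f u + rlmDpl1Extreme3a f v = rlmDpl1Extreme3a f (u + v) := by
  rw [← sub_eq_zero, rlmDpl1Extreme3a_add_sub_of_add_lt_one hf0 (by linarith) (by linarith) huv,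
    div_eq_zero_iff]
  left
  simp only [rlmDeviation]
  split_ifs <;> linarith

theorem rlmDpl1Extreme3a_add_eq_of_half_lt_of_half_lt (hf0 : 0 < f) {u v : ℝ}
    (hu : (1 + f) / 2 < u) (hu1 : u < 1) (hv : (1 + f) / 2 < v) (hv1 : v < 1)
    (huv : u + v - 1 < (1 + f) / 2) :
    rlmDpl1Extreme3a f u + rlmDpl1Extreme3a f v = rlmDpl1Extreme3a f (u + v) := by
  rw [← sub_eq_zero, rlmDpl1Extreme3a_add_sub_of_one_le_add hf0 hu1 hv1 (by linarith),
    div_eq_zero_iff]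
  left
  simp only [rlmDeviation]
  split_ifs <;> linarith

end rlmDpl1Extreme3a

namespace MinimalValid

variable {f : ℝ} {g : ℝ → ℝ}

theorem nonneg (hg : MinimalValid f g) (x : ℝ) : 0 ≤ g x := hg.1 x

theorem periodic (hg : MinimalValid f g) : Periodic g 1 := hg.2.2.1

theorem subadditive (hg : MinimalValid f g) (x y : ℝ) : g (x + y) ≤ g x + g y := hg.2.2.2.1 x y

theorem add_apply_sub (hg : MinimalValid f g) (x : ℝ) : g x + g (f - x) = 1 := hg.2.2.2.2 x

theorem le_one (hg : MinimalValid f g) (x : ℝ) : g x ≤ 1 := by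
  linarith [hg.add_apply_sub x, hg.nonneg (f - x)]

theorem apply_self (hg : MinimalValid f g) : g f = 1 := by
  simpa [hg.2.1] using hg.add_apply_sub 0

theorem apply_one_add_sub (hg : MinimalValid f g) (x : ℝ) : g (1 + f - x) = 1 - g x := by
  rw [show 1 + f - x = f - x + 1 by ring, hg.periodic]
  linarith [hg.add_apply_sub x]

theorem apply_half_one_add (hg : MinimalValid f g) : g ((1 + f) / 2) = 1 / 2 := by
  have := hg.apply_one_add_sub ((1 + f) / 2)
  rw [show 1 + f - (1 + f) / 2 = (1 + f) / 2 by ring] at this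
  linarith

theorem apply_eq_div_of_le (hg : MinimalValid f g) (hf0 : 0 < f)
    (hadd : ∀ x y, 0 ≤ x → 0 ≤ y → x + y ≤ f → g (x + y) = g x + g y) {t : ℝ} (ht0 : 0 ≤ t)
    (htf : t ≤ f) : g t = t / f := by
  obtain ⟨c, hc⟩ := exists_eq_mul_of_additive_of_abs_le (M := 1)
    (fun x y hx hy hxy => hadd x y hx hy hxy.le)
    fun x _ _ => abs_le.2 ⟨by linarith [hg.nonneg x], hg.le_one x⟩
  have hcf : c * f = 1 := by
    have := hadd (f / 2) (f / 2) (by positivity) (by positivity) (by linarith)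
    rw [add_halves, hg.apply_self, hc _ (by positivity) (by linarith)] at this
    linarith
  rcases htf.lt_or_eq with htf | rfl
  · rw [hc t ht0 htf, eq_div_iff hf0.ne']
    linear_combination t * hcf
  · rw [hg.apply_self, div_self hf0.ne']

theorem exists_affine_of_add_add_eq_two (hg : MinimalValid f g) (hf1 : f < 1)
    (h3 : ∀ u v w, u ∈ Ioo f ((1 + f) / 2) → v ∈ Ioo f ((1 + f) / 2) → w ∈ Ioo f ((1 + f) / 2) →
      u + v + w = 1 + 2 * f → g u + g v + g w = 2) :
    ∃ c, ∀ t ∈ Ioo f ((1 + f) / 2), g t = 2 / 3 + c * (t - (1 + 2 * f) / 3) := by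
  obtain ⟨m, hm⟩ : ∃ m, m = (1 + 2 * f) / 3 := ⟨_, rfl⟩
  rw [← hm]
  -- recentred at `m`, the relation reads `e d₁ + e d₂ + e d₃ = 0` for `e d = g (m + d) - 2 / 3`
  have hI : ∀ d, -((1 - f) / 3) < d → d < (1 - f) / 6 → m + d ∈ Ioo f ((1 + f) / 2) :=
    fun d h₁ h₂ => ⟨by linarith, by linarith⟩
  have hI₀ : m ∈ Ioo f ((1 + f) / 2) := by simpa using hI 0 (by linarith) (by linarith)
  have hgm : g m = 2 / 3 := by linarith [h3 m m m hI₀ hI₀ hI₀ (by linarith)]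
  obtain ⟨c, hc⟩ : ∃ c, ∀ d, 0 ≤ d → d < (1 - f) / 6 → g (m + d) - 2 / 3 = c * d := by
    refine exists_eq_mul_of_additive_of_abs_le (M := 1) (fun x y hx hy hxy => ?_)
      fun x _ _ => abs_le.2 ⟨by linarith [hg.nonneg (m + x)], by linarith [hg.le_one (m + x)]⟩
    have h₁ := h3 (m + x) (m + y) (m + -(x + y)) (hI x (by linarith) (by linarith))
      (hI y (by linarith) (by linarith)) (hI _ (by linarith) (by linarith)) (by linarith)
    have h₂ := h3 (m + (x + y)) (m + -(x + y)) m (hI _ (by linarith) (by linarith))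
      (hI _ (by linarith) (by linarith)) hI₀ (by linarith)
    linarith
  refine ⟨c, fun t ht => ?_⟩
  rcases le_or_gt m t with hmt | hmt
  · have := hc (t - m) (by linarith) (by linarith [ht.2])
    rw [add_sub_cancel] at this
    linarith
  · have := hc (-((t - m) / 2)) (by linarith) (by linarith [ht.1])
    have hI' := hI (-((t - m) / 2)) (by linarith) (by linarith [ht.1])
    linarith [h3 t _ _ ht hI' hI' (by linarith)]

theorem apply_eq_of_add_add_eq_two (hg : MinimalValid f g) (hf0 : 0 < f) (hf : f < 1 / 3)
    (h3 : ∀ u v w, u ∈ Ioo f ((1 + f) / 2) → v ∈ Ioo f ((1 + f) / 2) → w ∈ Ioo f ((1 + f) / 2) →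
      u + v + w = 1 + 2 * f → g u + g v + g w = 2)
    (h2 : ∀ a b, f < a → f < b → a + b < (1 + f) / 2 → g (a + b) = g a + g b) {t : ℝ}
    (ht : t ∈ Ioo f ((1 + f) / 2)) : g t = 2 * t / (1 + 2 * f) := by
  obtain ⟨c, hc⟩ := hg.exists_affine_of_add_add_eq_two (by linarith) h3
  -- any `a` with `f < a` and `2 a < (1 + f) / 2` would do
  have ha : (1 + 5 * f) / 8 ∈ Ioo f ((1 + f) / 2) := ⟨by linarith, by linarith⟩
  have h2a := h2 _ _ ha.1 ha.1 (by linarith)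
  rw [hc _ ⟨by linarith, by linarith⟩, hc _ ha] at h2a
  have hcf : c * (1 + 2 * f) = 2 := by linear_combination 3 * h2a
  rw [hc t ht, eq_div_iff (by linarith)]
  linear_combination (t - (1 + 2 * f) / 3) * hcf

theorem apply_eq_of_half_lt (hg : MinimalValid f g) (hf0 : 0 < f)
    (hB : ∀ t ∈ Ioo f ((1 + f) / 2), g t = 2 * t / (1 + 2 * f)) {t : ℝ} (ht : (1 + f) / 2 < t)
    (ht1 : t < 1) : g t = (2 * t - 1) / (1 + 2 * f) := by
  have := hg.apply_one_add_sub t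
  rw [hB _ ⟨by linarith, by linarith⟩] at this
  rw [eq_div_iff (by linarith)]
  field_simp at this
  linarith

theorem eq_rlmDpl1Extreme3a (hg : MinimalValid f g) (hf0 : 0 < f) (hf : f < 1 / 3)
    (hadd : ∀ x y, rlmDpl1Extreme3a f x + rlmDpl1Extreme3a f y = rlmDpl1Extreme3a f (x + y) →
      g x + g y = g (x + y)) :
    g = rlmDpl1Extreme3a f := by
  have hA : ∀ x y, 0 ≤ x → 0 ≤ y → x + y ≤ f → g (x + y) = g x + g y := fun x y hx hy hxy =>
    (hadd x y (rlmDpl1Extreme3a_add_eq_of_add_le hf0 (by linarith) hx hy hxy)).symm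
  have h3 : ∀ u v w, u ∈ Ioo f ((1 + f) / 2) → v ∈ Ioo f ((1 + f) / 2) →
      w ∈ Ioo f ((1 + f) / 2) → u + v + w = 1 + 2 * f → g u + g v + g w = 2 := by
    rintro u v w ⟨hu, hu'⟩ ⟨hv, hv'⟩ ⟨hw, hw'⟩ hsum
    have := hadd (1 + f - u) (1 + f - v) (rlmDpl1Extreme3a_add_eq_of_half_lt_of_half_lt hf0
      (by linarith) (by linarith) (by linarith) (by linarith) (by linarith))
    rw [hg.apply_one_add_sub, hg.apply_one_add_sub,
      show 1 + f - u + (1 + f - v) = w + 1 by linarith, hg.periodic] at this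
    linarith
  have h2 : ∀ a b, f < a → f < b → a + b < (1 + f) / 2 → g (a + b) = g a + g b := by
    intro a b ha hb hab
    have := hadd a (1 + f - (a + b))
      (rlmDpl1Extreme3a_add_eq_of_lt_of_half_lt hf0 ha (by linarith) (by linarith))
    rw [hg.apply_one_add_sub, show a + (1 + f - (a + b)) = 1 + f - b by ring,
      hg.apply_one_add_sub] at this
    linarith
  have hB : ∀ t ∈ Ioo f ((1 + f) / 2), g t = 2 * t / (1 + 2 * f) :=
    fun t ht => hg.apply_eq_of_add_add_eq_two hf0 hf h3 h2 ht
  funext x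
  rw [← hg.periodic.apply_fract, ← (rlmDpl1Extreme3a_periodic f).apply_fract]
  simp only [rlmDpl1Extreme3a, Int.fract_fract]
  split_ifs with h₁ h₂ h₃
  · exact hg.apply_eq_div_of_le hf0 hA (Int.fract_nonneg x) h₁
  · exact hB _ ⟨not_le.1 h₁, h₂⟩
  · rw [h₃, hg.apply_half_one_add]
  · exact hg.apply_eq_of_half_lt hf0 hB (lt_of_le_of_ne (not_lt.1 h₂) (Ne.symm h₃))
      (Int.fract_lt_one x)

end MinimalValid

theorem rlmDpl1Extreme3a_extreme (f : ℝ) (hf0 : 0 < f) (hf : f < 1 / 3) :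
    MinimalValid f (rlmDpl1Extreme3a f) ∧
    ∀ π₁ π₂ : ℝ → ℝ, MinimalValid f π₁ → MinimalValid f π₂ →
      (∀ x, rlmDpl1Extreme3a f x = (π₁ x + π₂ x) / 2) →
      π₁ = rlmDpl1Extreme3a f ∧ π₂ = rlmDpl1Extreme3a f := by
  refine ⟨rlmDpl1Extreme3a_minimalValid hf0 (by linarith), fun π₁ π₂ h₁ h₂ havg => ⟨?_, ?_⟩⟩
  · exact h₁.eq_rlmDpl1Extreme3a hf0 hf fun x y =>
      add_eq_of_eq_avg_of_subadditive h₁.subadditive h₂.subadditive havg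
  · exact h₂.eq_rlmDpl1Extreme3a hf0 hf fun x y =>
      add_eq_of_eq_avg_of_subadditive h₂.subadditive h₁.subadditive fun x => by rw [havg, add_comm]
end

section
/- Let f ∈ (0,1) and let π, π¹, π² : ℝ → ℝ be minimal valid functions with parameter f such that π = (π¹ + π²)/2. If π is continuous from the right at 0, then π¹ and π² are continuous at every point at which π is continuous. -/
/-!
Write `2π = π₁ + π₂`. Subadditivity of `π₁` and nonnegativity of `π₂` give
`π₁ b - π₁ a ≤ π₁ (b - a) ≤ 2π (b - a)`; the same with the roles swapped, together with
`π₁ = 2π - π₂`, bounds the difference from below. Hence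
`|π₁ y - π₁ x| ≤ 2π |y - x| + 2|π y - π x|`, and both terms vanish as `y → x`: the first by
right continuity of `π` at `0` (where `π 0 = 0`), the second by continuity of `π` at `x`.
-/

open Filter Topology

section Average

variable {G : Type*} [AddCommGroup G] {π π₁ π₂ : G → ℝ}

lemma sub_le_two_mul_of_average (hsub₁ : ∀ x y, π₁ (x + y) ≤ π₁ x + π₁ y)
    (hnonneg₂ : ∀ x, 0 ≤ π₂ x) (havg : ∀ x, π x = (π₁ x + π₂ x) / 2) (a b : G) :
    π₁ b - π₁ a ≤ 2 * π (b - a) := by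
  have hsplit := hsub₁ a (b - a)
  rw [add_sub_cancel] at hsplit
  linarith [havg (b - a), hnonneg₂ (b - a)]

lemma abs_sub_le_of_average (hsub₁ : ∀ x y, π₁ (x + y) ≤ π₁ x + π₁ y)
    (hsub₂ : ∀ x y, π₂ (x + y) ≤ π₂ x + π₂ y) (hnonneg₁ : ∀ x, 0 ≤ π₁ x)
    (hnonneg₂ : ∀ x, 0 ≤ π₂ x) (havg : ∀ x, π x = (π₁ x + π₂ x) / 2) (a b : G) :
    |π₁ b - π₁ a| ≤ 2 * π (b - a) + 2 * |π b - π a| := by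
  have upper := sub_le_two_mul_of_average hsub₁ hnonneg₂ havg a b
  have lower := sub_le_two_mul_of_average (π := π) hsub₂ hnonneg₁
    (fun x => by rw [havg x, add_comm]) a b
  rw [abs_le]
  constructor <;>
    linarith [havg a, havg b, le_abs_self (π b - π a), neg_abs_le (π b - π a)]

end Average

section Real

variable {π π₁ π₂ : ℝ → ℝ}

lemma abs_sub_le_of_average_abs (hsub₁ : ∀ x y, π₁ (x + y) ≤ π₁ x + π₁ y)
    (hsub₂ : ∀ x y, π₂ (x + y) ≤ π₂ x + π₂ y) (hnonneg₁ : ∀ x, 0 ≤ π₁ x)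
    (hnonneg₂ : ∀ x, 0 ≤ π₂ x) (havg : ∀ x, π x = (π₁ x + π₂ x) / 2) (x y : ℝ) :
    |π₁ y - π₁ x| ≤ 2 * π |y - x| + 2 * |π y - π x| := by
  rcases le_total x y with hxy | hyx
  · rw [abs_of_nonneg (sub_nonneg.2 hxy)]
    exact abs_sub_le_of_average hsub₁ hsub₂ hnonneg₁ hnonneg₂ havg x y
  · rw [abs_sub_comm y x, abs_of_nonneg (sub_nonneg.2 hyx), abs_sub_comm (π₁ y),
      abs_sub_comm (π y)]
    exact abs_sub_le_of_average hsub₁ hsub₂ hnonneg₁ hnonneg₂ havg y x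

lemma continuousAt_of_average (hsub₁ : ∀ x y, π₁ (x + y) ≤ π₁ x + π₁ y)
    (hsub₂ : ∀ x y, π₂ (x + y) ≤ π₂ x + π₂ y) (hnonneg₁ : ∀ x, 0 ≤ π₁ x)
    (hnonneg₂ : ∀ x, 0 ≤ π₂ x) (havg : ∀ x, π x = (π₁ x + π₂ x) / 2)
    (hπ0 : Tendsto π (𝓝[≥] 0) (𝓝 0)) {x : ℝ} (hx : ContinuousAt π x) :
    ContinuousAt π₁ x := by
  have hdist : Tendsto (fun y => |y - x|) (𝓝 x) (𝓝[≥] 0) :=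
    tendsto_nhdsWithin_iff.2
      ⟨(continuous_abs.comp (continuous_sub_right x)).tendsto' x 0 (by simp),
        Eventually.of_forall fun y => abs_nonneg (y - x)⟩
  have hbound : Tendsto (fun y => 2 * π |y - x| + 2 * |π y - π x|) (𝓝 x) (𝓝 0) := by
    simpa using ((hπ0.comp hdist).const_mul 2).add
      (((hx.tendsto.sub_const (π x)).abs).const_mul 2)
  refine tendsto_sub_nhds_zero_iff.1 (squeeze_zero_norm (fun y => ?_) hbound)
  rw [Real.norm_eq_abs]
  exact abs_sub_le_of_average_abs hsub₁ hsub₂ hnonneg₁ hnonneg₂ havg x y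

end Real

theorem continuity_transfers_general (f : ℝ)
    (π π₁ π₂ : ℝ → ℝ)
    (hπ₁ : MinimalValid f π₁) (hπ₂ : MinimalValid f π₂)
    (havg : ∀ x, π x = (π₁ x + π₂ x) / 2)
    (hright : ContinuousWithinAt π (Set.Ici 0) 0) :
    ∀ x : ℝ, ContinuousAt π x → ContinuousAt π₁ x ∧ ContinuousAt π₂ x := by
  intro x hx
  obtain ⟨hnonneg₁, hzero₁, -, hsub₁, -⟩ := hπ₁
  obtain ⟨hnonneg₂, hzero₂, -, hsub₂, -⟩ := hπ₂
  have hπ0 : π 0 = 0 := by rw [havg, hzero₁, hzero₂]; norm_num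
  have hright₀ : Tendsto π (𝓝[≥] 0) (𝓝 0) := by
    simpa only [hπ0] using hright.tendsto
  exact ⟨continuousAt_of_average hsub₁ hsub₂ hnonneg₁ hnonneg₂ havg hright₀ hx,
    continuousAt_of_average hsub₂ hsub₁ hnonneg₂ hnonneg₁ (fun y => by rw [havg y, add_comm])
      hright₀ hx⟩

theorem continuity_transfers (f : ℝ) (hf0 : 0 < f) (hf1 : f < 1)
    (π π₁ π₂ : ℝ → ℝ)
    (hπ : MinimalValid f π) (hπ₁ : MinimalValid f π₁) (hπ₂ : MinimalValid f π₂)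
    (havg : ∀ x, π x = (π₁ x + π₂ x) / 2)
    (hright : ContinuousWithinAt π (Set.Ici 0) 0) :
    ∀ x : ℝ, ContinuousAt π x → ContinuousAt π₁ x ∧ ContinuousAt π₂ x :=
  continuity_transfers_general f π π₁ π₂ hπ₁ hπ₂ havg hright
end

section
/- Let f and b be real numbers such that 0 < f < b ≤ (1+f)/4, and let π : ℝ → ℝ be the drlm_backward_3_slope function. Then π is an extreme minimal valid function: π is a minimal valid function with parameter f, and whenever π = (π¹ + π²)/2 with π¹, π² minimal valid functions with parameter f, one has π¹ = π² = π. (No rationality assumption on f and b is needed.) -/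
/-- The `drlm_backward_3_slope` function, periodic with period 1, defined via
the fractional part. -/
noncomputable def drlmBackward3Slope (f b : ℝ) : ℝ → ℝ := fun x =>
  let t := Int.fract x
  if t ≤ f then t / f
  else if t ≤ b then 1 + (1 + f - b) * (t - f) / ((1 + f) * (f - b))
  else if t ≤ 1 + f - b then t / (1 + f)
  else (1 + f - b) * (t - 1) / ((1 + f) * (f - b))

open Set Function

theorem Function.Periodic.map_fract {α β : Type*} [Ring α] [LinearOrder α] [FloorRing α]
    {g : α → β} (h : Periodic g 1) (x : α) : g (Int.fract x) = g x := by
  simpa only [mul_one, Int.self_sub_floor] using h.sub_int_mul_eq (x := x) ⌊x⌋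

theorem Function.Periodic.eq_of_eqOn_Ico {α β : Type*} [Ring α] [LinearOrder α]
    [IsStrictOrderedRing α] [FloorRing α] {g h : α → β} (hg : Periodic g 1)
    (hh : Periodic h 1) (hgh : EqOn g h (Ico 0 1)) : g = h :=
  funext fun x => by
    rw [← hg.map_fract, ← hh.map_fract]
    exact hgh ⟨Int.fract_nonneg x, Int.fract_lt_one x⟩

theorem MonotoneOn.Icc_union_Icc {α β : Type*} [LinearOrder α] [Preorder β] {g : α → β}
    {a c d : α} (h₁ : MonotoneOn g (Icc a c)) (h₂ : MonotoneOn g (Icc c d)) (hac : a ≤ c)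
    (hcd : c ≤ d) : MonotoneOn g (Icc a d) := by
  rw [← Icc_union_Icc_eq_Icc hac hcd]
  exact h₁.union_right h₂ (isGreatest_Icc hac) (isLeast_Icc hcd)

lemma monotoneOn_of_eqOn_mul_add {g : ℝ → ℝ} {s : Set ℝ} {k c : ℝ} (hk : 0 ≤ k)
    (h : EqOn g (fun t => k * t + c) s) : MonotoneOn g s :=
  (((monotone_id.const_mul hk).add_const c).monotoneOn s).congr h.symm

lemma le_one_of_add_apply_sub_eq_one {f : ℝ} {φ : ℝ → ℝ} (hnn : ∀ x, 0 ≤ φ x)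
    (hsym : ∀ x, φ x + φ (f - x) = 1) (x : ℝ) : φ x ≤ 1 := by
  linarith [hsym x, hnn (f - x)]

def AdditiveOnTriangle (g : ℝ → ℝ) (a c : ℝ) : Prop :=
  ∀ x y, a ≤ x → a ≤ y → x + y ≤ c → g (x + y) = g x + g y

namespace AdditiveOnTriangle

variable {g : ℝ → ℝ} {a c L C : ℝ}

lemma map_nat_mul (h : AdditiveOnTriangle g 0 L) {t : ℝ} (ht : 0 ≤ t) :
    ∀ n : ℕ, n * t ≤ L → g (n * t) = n * g t
  | 0, hL => by simpa using h 0 0 le_rfl le_rfl (by simpa using hL)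
  | n + 1, hL => by
    have hn : (n : ℝ) * t ≤ L := by push_cast at hL; nlinarith
    push_cast
    rw [add_one_mul, h _ _ (by positivity) ht (by push_cast at hL; linarith), map_nat_mul h ht n hn]
    ring

lemma abs_le_div (h : AdditiveOnTriangle g 0 L) (hL : 0 < L) (hgL : g L = 0)
    (hbd : ∀ x ∈ Icc 0 L, |g x| ≤ C) {x : ℝ} (hx : x ∈ Icc 0 L) {q : ℕ} (hq : 0 < q) :
    |g x| ≤ C / q := by
  -- `g (L / q) = 0`, so `g x = g r` for the remainder `r` of `x` modulo `L / q`, and `q * r ≤ L`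
  have hq' : (0 : ℝ) < q := by exact_mod_cast hq
  set t := L / q
  have ht : 0 < t := div_pos hL hq'
  have hqt : q * t = L := mul_div_cancel₀ L hq'.ne'
  have hgt : g t = 0 := by
    have := h.map_nat_mul ht.le q hqt.le
    rw [hqt, hgL] at this
    exact (mul_eq_zero.1 this.symm).resolve_left hq'.ne'
  set k := ⌊x / t⌋₊
  have hkt : k * t ≤ x := (le_div_iff₀ ht).1 (Nat.floor_le (div_nonneg hx.1 ht.le))
  have hxk : x - k * t < t := by
    have := (div_lt_iff₀ ht).1 (Nat.lt_floor_add_one (x / t))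
    linarith
  set r := x - k * t
  have hr : 0 ≤ r := sub_nonneg.2 hkt
  have hqr : q * r ≤ L := by rw [← hqt]; gcongr
  have hgx : g x = g r := by
    rw [show x = k * t + r by ring, h _ _ (by positivity) hr (by linarith [hx.2]),
      h.map_nat_mul ht.le k (by linarith [hx.2]), hgt, mul_zero, zero_add]
  rw [hgx, le_div_iff₀ hq', ← abs_of_pos hq', ← abs_mul, mul_comm, ← h.map_nat_mul hr q hqr]
  exact hbd _ ⟨by positivity, hqr⟩

lemma eq_zero (h : AdditiveOnTriangle g 0 L) (hL : 0 < L) (hgL : g L = 0)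
    (hbd : ∀ x ∈ Icc 0 L, |g x| ≤ C) {x : ℝ} (hx : x ∈ Icc 0 L) : g x = 0 := by
  have : |g x| ≤ 0 :=
    ge_of_tendsto (tendsto_const_div_atTop_nhds_zero_nat C)
      (Filter.eventually_atTop.2 ⟨1, fun q hq => h.abs_le_div hL hgL hbd hx hq⟩)
  exact abs_nonpos_iff.1 this

lemma eq_div_mul (h : AdditiveOnTriangle g 0 L) (hL : 0 < L) (hbd : ∀ x ∈ Icc 0 L, |g x| ≤ C)
    {x : ℝ} (hx : x ∈ Icc 0 L) : g x = g L / L * x := by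
  set σ := g L / L
  have hσ : g L - σ * L = 0 := by simp only [σ]; field_simp; ring
  have hlin : AdditiveOnTriangle (fun x => g x - σ * x) 0 L := fun x y hx hy hxy => by
    simp only [h x y hx hy hxy]; ring
  have hbd' : ∀ x ∈ Icc 0 L, |g x - σ * x| ≤ C + |σ| * L := fun x hx => by
    calc |g x - σ * x| ≤ |g x| + |σ| * |x| := by rw [← abs_mul]; exact abs_sub _ _
      _ ≤ C + |σ| * L := by
        rw [abs_of_nonneg hx.1]; gcongr; exacts [hbd x hx, hx.2]
  linarith [hlin.eq_zero hL hσ hbd' hx]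

lemma exists_eq_mul (h : AdditiveOnTriangle g a c) (ha : 0 < a) (hac : 3 * a ≤ c)
    (hbd : ∀ x ∈ Icc a c, |g x| ≤ C) : ∃ σ, ∀ x ∈ Icc a c, g x = σ * x := by
  set ψ := fun t => g (t + a) - g a
  have hψ : AdditiveOnTriangle ψ 0 (c - 2 * a) := fun x y hx hy hxy => by
    have h₁ := h (x + a) (y + a) (by linarith) (by linarith) (by linarith)
    have h₂ := h (x + y + a) a (by linarith) le_rfl (by linarith)
    simp only [ψ, show x + a + (y + a) = x + y + a + a by ring] at h₁ h₂ ⊢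
    linarith
  have hψbd : ∀ t ∈ Icc 0 (c - 2 * a), |ψ t| ≤ C + C := fun t ht =>
    (abs_sub _ _).trans (add_le_add (hbd _ ⟨by linarith [ht.1], by linarith [ht.2]⟩)
      (hbd a ⟨le_rfl, by linarith⟩))
  set σ := ψ (c - 2 * a) / (c - 2 * a)
  have hψσ : ∀ t ∈ Icc 0 (c - 2 * a), g (t + a) = g a + σ * t := fun t ht => by
    have := hψ.eq_div_mul (by linarith) hψbd ht
    simp only [ψ] at this
    linarith
  have hga : g a = σ * a := by
    have := hψσ a ⟨ha.le, by linarith⟩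
    rw [h a a le_rfl le_rfl (by linarith)] at this
    linarith
  have hmid : ∀ x ∈ Icc a (c - a), g x = σ * x := fun x hx => by
    have := hψσ (x - a) ⟨by linarith [hx.1], by linarith [hx.2]⟩
    rw [sub_add_cancel] at this
    rw [this, hga]; ring
  refine ⟨σ, fun x hx => ?_⟩
  rcases le_or_gt x (c - a) with hxc | hxc
  · exact hmid x ⟨hx.1, hxc⟩
  · rw [show x = x - a + a by ring, h _ _ (by linarith) le_rfl (by linarith [hx.2]),
      hmid _ ⟨by linarith, by linarith [hx.2]⟩, hga]
    ring

lemma of_midpoint {φ φ₁ φ₂ : ℝ → ℝ} (h : AdditiveOnTriangle φ a c)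
    (havg : ∀ x, φ x = (φ₁ x + φ₂ x) / 2) (h₁ : ∀ x y, φ₁ (x + y) ≤ φ₁ x + φ₁ y)
    (h₂ : ∀ x y, φ₂ (x + y) ≤ φ₂ x + φ₂ y) : AdditiveOnTriangle φ₁ a c :=
  fun x y hx hy hxy => by
  have := h x y hx hy hxy
  rw [havg, havg x, havg y] at this
  linarith [h₁ x y, h₂ x y]

end AdditiveOnTriangle

section DrlmBackward3Slope

variable {f b t : ℝ}

-- the slope of `drlmBackward3Slope f b` on `[f, b]` and on `[1 + f - b, 1]`
noncomputable def drlmNegSlope (f b : ℝ) : ℝ := (1 + f - b) / ((1 + f) * (f - b))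

lemma drlmNegSlope_nonpos (hf : 0 < f) (hfb : f < b) (hb : b ≤ 1 + f) : drlmNegSlope f b ≤ 0 :=
  div_nonpos_of_nonneg_of_nonpos (by linarith)
    (mul_nonpos_of_nonneg_of_nonpos (by linarith) (by linarith))

lemma drlmNegSlope_mul_sub (hf : 0 < f) (hfb : f < b) :
    drlmNegSlope f b * (f - b) = (1 + f - b) / (1 + f) := by
  have : f - b ≠ 0 := by linarith
  have : 1 + f ≠ 0 := by linarith
  unfold drlmNegSlope
  field_simp

lemma drlmBackward3Slope_periodic : Periodic (drlmBackward3Slope f b) 1 := fun x => by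
  simp only [drlmBackward3Slope, Int.fract_add_one]

lemma drlmBackward3Slope_apply_of_mem_Ico (ht : t ∈ Ico 0 1) :
    drlmBackward3Slope f b t =
      if t ≤ f then t / f
      else if t ≤ b then 1 + drlmNegSlope f b * (t - f)
      else if t ≤ 1 + f - b then t / (1 + f)
      else drlmNegSlope f b * (t - 1) := by
  simp only [drlmBackward3Slope, Int.fract_eq_self.2 ht, drlmNegSlope, mul_div_right_comm]

lemma drlmBackward3Slope_eq_div_f (ht : t ∈ Icc 0 f) (hf1 : f < 1) :
    drlmBackward3Slope f b t = t / f := by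
  rw [drlmBackward3Slope_apply_of_mem_Ico ⟨ht.1, by linarith [ht.2]⟩, if_pos ht.2]

lemma drlmBackward3Slope_eq_one_add_negSlope_mul (ht : t ∈ Icc f b) (hf : 0 < f) (hb1 : b < 1) :
    drlmBackward3Slope f b t = 1 + drlmNegSlope f b * (t - f) := by
  obtain ⟨h0, h1⟩ := ht
  rw [drlmBackward3Slope_apply_of_mem_Ico ⟨by linarith, by linarith⟩]
  split_ifs with h
  · rw [le_antisymm h h0, div_self hf.ne', sub_self, mul_zero, add_zero]
  · rfl

lemma drlmBackward3Slope_eq_div_one_add_f (ht : t ∈ Icc b (1 + f - b)) (hf : 0 < f)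
    (hfb : f < b) : drlmBackward3Slope f b t = t / (1 + f) := by
  obtain ⟨h0, h1⟩ := ht
  have hsb := drlmNegSlope_mul_sub hf hfb
  rw [drlmBackward3Slope_apply_of_mem_Ico ⟨by linarith, by linarith⟩, if_neg (by linarith)]
  split_ifs with h
  · rw [le_antisymm h h0]
    field_simp at hsb ⊢
    linarith
  · rfl

lemma drlmBackward3Slope_eq_negSlope_mul (ht : t ∈ Icc (1 + f - b) 1) (hf : 0 < f) (hfb : f < b)
    (hb : 2 * b ≤ 1 + f) : drlmBackward3Slope f b t = drlmNegSlope f b * (t - 1) := by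
  obtain ⟨h0, h1⟩ := ht
  rcases h0.eq_or_lt with rfl | h0
  · rw [drlmBackward3Slope_eq_div_one_add_f ⟨by linarith, le_rfl⟩ hf hfb,
      show 1 + f - b - 1 = f - b by ring, drlmNegSlope_mul_sub hf hfb]
  rcases h1.eq_or_lt with rfl | h1
  · rw [drlmBackward3Slope_periodic.eq,
      drlmBackward3Slope_eq_div_f ⟨le_rfl, hf.le⟩ (by linarith)]
    simp
  rw [drlmBackward3Slope_apply_of_mem_Ico ⟨by linarith, h1⟩, if_neg (by linarith),
    if_neg (by linarith), if_neg h0.not_ge]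

lemma drlmBackward3Slope_symm (hf : 0 < f) (hfb : f < b) (hb : 2 * b ≤ 1 + f) (x : ℝ) :
    drlmBackward3Slope f b x + drlmBackward3Slope f b (f - x) = 1 := by
  have hper := drlmBackward3Slope_periodic (f := f) (b := b)
  have hfx : drlmBackward3Slope f b (f - x) = drlmBackward3Slope f b (1 + f - Int.fract x) := by
    rw [← hper.int_mul (⌊x⌋ + 1) (f - x), ← Int.self_sub_floor]
    push_cast
    congr 1
    ring
  rw [← hper.map_fract x, hfx]
  set t := Int.fract x
  have h0 : 0 ≤ t := Int.fract_nonneg x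
  have h1 : t < 1 := Int.fract_lt_one x
  rcases le_or_gt t f with htf | htf
  · rw [show 1 + f - t = f - t + 1 by ring, hper,
      drlmBackward3Slope_eq_div_f ⟨h0, htf⟩ (by linarith),
      drlmBackward3Slope_eq_div_f ⟨by linarith, by linarith⟩ (by linarith)]
    field_simp
    ring
  rcases le_or_gt t b with htb | htb
  · rw [drlmBackward3Slope_eq_one_add_negSlope_mul ⟨htf.le, htb⟩ hf (by linarith),
      drlmBackward3Slope_eq_negSlope_mul ⟨by linarith, by linarith⟩ hf hfb hb]
    ring
  rcases le_or_gt t (1 + f - b) with htA | htA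
  · rw [drlmBackward3Slope_eq_div_one_add_f ⟨htb.le, htA⟩ hf hfb,
      drlmBackward3Slope_eq_div_one_add_f ⟨by linarith, by linarith⟩ hf hfb]
    field_simp
    ring
  · rw [drlmBackward3Slope_eq_negSlope_mul ⟨htA.le, h1.le⟩ hf hfb hb,
      drlmBackward3Slope_eq_one_add_negSlope_mul ⟨by linarith, by linarith⟩ hf (by linarith)]
    ring

lemma drlmBackward3Slope_antitoneOn_Icc_f_b (hf : 0 < f) (hfb : f < b) (hb : 2 * b ≤ 1 + f) :
    AntitoneOn (drlmBackward3Slope f b) (Icc f b) := fun x hx y hy hxy => by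
  rw [drlmBackward3Slope_eq_one_add_negSlope_mul hx hf (by linarith),
    drlmBackward3Slope_eq_one_add_negSlope_mul hy hf (by linarith)]
  nlinarith [drlmNegSlope_nonpos hf hfb (by linarith)]

lemma drlmBackward3Slope_antitoneOn_Icc_one_add_f_sub_b_one (hf : 0 < f) (hfb : f < b)
    (hb : 2 * b ≤ 1 + f) : AntitoneOn (drlmBackward3Slope f b) (Icc (1 + f - b) 1) :=
  fun x hx y hy hxy => by
  rw [drlmBackward3Slope_eq_negSlope_mul hx hf hfb hb,
    drlmBackward3Slope_eq_negSlope_mul hy hf hfb hb]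
  nlinarith [drlmNegSlope_nonpos hf hfb (by linarith)]

lemma div_one_add_f_le_drlmBackward3Slope (ht : t ∈ Icc 0 (1 + f - b)) (hf : 0 < f) (hfb : f < b)
    (hb : 2 * b ≤ 1 + f) : t / (1 + f) ≤ drlmBackward3Slope f b t := by
  obtain ⟨h0, h1⟩ := ht
  rcases le_or_gt t f with htf | htf
  · rw [drlmBackward3Slope_eq_div_f ⟨h0, htf⟩ (by linarith)]
    exact div_le_div_of_nonneg_left h0 hf (by linarith)
  rcases le_or_gt t b with htb | htb
  · calc t / (1 + f) ≤ b / (1 + f) := by gcongr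
      _ = drlmBackward3Slope f b b :=
        (drlmBackward3Slope_eq_div_one_add_f ⟨le_rfl, by linarith⟩ hf hfb).symm
      _ ≤ drlmBackward3Slope f b t :=
        drlmBackward3Slope_antitoneOn_Icc_f_b hf hfb hb ⟨htf.le, htb⟩ ⟨hfb.le, le_rfl⟩ htb
  · exact (drlmBackward3Slope_eq_div_one_add_f ⟨htb.le, h1⟩ hf hfb).ge

lemma drlmBackward3Slope_le_div_one_add_f (ht : t ∈ Icc b 1) (hf : 0 < f) (hfb : f < b)
    (hb : 2 * b ≤ 1 + f) : drlmBackward3Slope f b t ≤ t / (1 + f) := by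
  obtain ⟨h0, h1⟩ := ht
  rcases le_or_gt t (1 + f - b) with htA | htA
  · exact (drlmBackward3Slope_eq_div_one_add_f ⟨h0, htA⟩ hf hfb).le
  calc drlmBackward3Slope f b t ≤ drlmBackward3Slope f b (1 + f - b) :=
        drlmBackward3Slope_antitoneOn_Icc_one_add_f_sub_b_one hf hfb hb ⟨le_rfl, by linarith⟩
          ⟨htA.le, h1⟩ htA.le
    _ = (1 + f - b) / (1 + f) :=
      drlmBackward3Slope_eq_div_one_add_f ⟨by linarith, le_rfl⟩ hf hfb
    _ ≤ t / (1 + f) := by gcongr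

lemma drlmBackward3Slope_nonneg (hf : 0 < f) (hfb : f < b) (hb : 2 * b ≤ 1 + f) (x : ℝ) :
    0 ≤ drlmBackward3Slope f b x := by
  rw [← drlmBackward3Slope_periodic.map_fract]
  have h0 := Int.fract_nonneg x
  have h1 := (Int.fract_lt_one x).le
  rcases le_or_gt (Int.fract x) (1 + f - b) with htA | htA
  · exact (div_nonneg h0 (by linarith)).trans
      (div_one_add_f_le_drlmBackward3Slope ⟨h0, htA⟩ hf hfb hb)
  · rw [drlmBackward3Slope_eq_negSlope_mul ⟨htA.le, h1⟩ hf hfb hb]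
    exact mul_nonneg_of_nonpos_of_nonpos (drlmNegSlope_nonpos hf hfb (by linarith)) (by linarith)

lemma drlmBackward3Slope_le_one_add_div (ht : t ∈ Icc 0 1) (hf : 0 < f) (hfb : f < b)
    (hb : 2 * b ≤ 1 + f) : drlmBackward3Slope f b t ≤ (1 + t) / (1 + f) := by
  rcases le_or_gt t f with htf | htf
  · rw [drlmBackward3Slope_eq_div_f ⟨ht.1, htf⟩ (by linarith),
      div_le_div_iff₀ hf (by linarith)]
    linarith
  · calc drlmBackward3Slope f b t ≤ 1 :=
          le_one_of_add_apply_sub_eq_one (drlmBackward3Slope_nonneg hf hfb hb)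
            (drlmBackward3Slope_symm hf hfb hb) t
      _ ≤ (1 + t) / (1 + f) := by rw [one_le_div₀ (by linarith)]; linarith

lemma monotoneOn_Icc_zero_one_of_pieces {g : ℝ → ℝ} (hf : 0 ≤ f) (hfb : f ≤ b)
    (hb : 2 * b ≤ 1 + f) (h₁ : MonotoneOn g (Icc 0 f)) (h₂ : MonotoneOn g (Icc f b))
    (h₃ : MonotoneOn g (Icc b (1 + f - b))) (h₄ : MonotoneOn g (Icc (1 + f - b) 1)) :
    MonotoneOn g (Icc 0 1) :=
  (((h₁.Icc_union_Icc h₂ hf hfb).Icc_union_Icc h₃ (by linarith) (by linarith)).Icc_union_Icc h₄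
    (by linarith) (by linarith))

lemma drlmBackward3Slope_monotoneOn_div_sub (hf : 0 < f) (hfb : f < b) (hb : 2 * b ≤ 1 + f) :
    MonotoneOn (fun t => t / f - drlmBackward3Slope f b t) (Icc 0 1) := by
  have hs := drlmNegSlope_nonpos hf hfb (by linarith)
  have hinv : 1 / (1 + f) ≤ 1 / f := one_div_le_one_div_of_le hf (by linarith)
  have hf' : 0 < 1 / f := one_div_pos.2 hf
  apply monotoneOn_Icc_zero_one_of_pieces hf.le hfb.le hb
  · refine monotoneOn_of_eqOn_mul_add (k := 0) (c := 0) le_rfl fun t ht => ?_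
    simp only [drlmBackward3Slope_eq_div_f ht (by linarith)]; ring
  · refine monotoneOn_of_eqOn_mul_add (k := 1 / f - drlmNegSlope f b)
      (c := drlmNegSlope f b * f - 1) (by linarith) fun t ht => ?_
    simp only [drlmBackward3Slope_eq_one_add_negSlope_mul ht hf (by linarith)]; ring
  · refine monotoneOn_of_eqOn_mul_add (k := 1 / f - 1 / (1 + f)) (c := 0) (by linarith)
      fun t ht => ?_
    simp only [drlmBackward3Slope_eq_div_one_add_f ht hf hfb]; ring
  · refine monotoneOn_of_eqOn_mul_add (k := 1 / f - drlmNegSlope f b) (c := drlmNegSlope f b)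
      (by linarith) fun t ht => ?_
    simp only [drlmBackward3Slope_eq_negSlope_mul ht hf hfb hb]; ring

lemma drlmBackward3Slope_monotoneOn_sub_negSlope_mul (hf : 0 < f) (hfb : f < b)
    (hb : 2 * b ≤ 1 + f) :
    MonotoneOn (fun t => drlmBackward3Slope f b t - drlmNegSlope f b * t) (Icc 0 1) := by
  have hs := drlmNegSlope_nonpos hf hfb (by linarith)
  have hf' : 0 < 1 / f := one_div_pos.2 hf
  have hf'' : 0 < 1 / (1 + f) := one_div_pos.2 (by linarith)
  apply monotoneOn_Icc_zero_one_of_pieces hf.le hfb.le hb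
  · refine monotoneOn_of_eqOn_mul_add (k := 1 / f - drlmNegSlope f b) (c := 0) (by linarith)
      fun t ht => ?_
    simp only [drlmBackward3Slope_eq_div_f ht (by linarith)]; ring
  · refine monotoneOn_of_eqOn_mul_add (k := 0) (c := 1 - drlmNegSlope f b * f) le_rfl
      fun t ht => ?_
    simp only [drlmBackward3Slope_eq_one_add_negSlope_mul ht hf (by linarith)]; ring
  · refine monotoneOn_of_eqOn_mul_add (k := 1 / (1 + f) - drlmNegSlope f b) (c := 0) (by linarith)
      fun t ht => ?_
    simp only [drlmBackward3Slope_eq_div_one_add_f ht hf hfb]; ring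
  · refine monotoneOn_of_eqOn_mul_add (k := 0) (c := -drlmNegSlope f b) le_rfl fun t ht => ?_
    simp only [drlmBackward3Slope_eq_negSlope_mul ht hf hfb hb]; ring

lemma drlmBackward3Slope_add_le_of_le {p q : ℝ} (hp : 0 ≤ p) (hq : q < 1) (hpq : p ≤ q)
    (hf : 0 < f) (hfb : f < b) (hb : 2 * b ≤ 1 + f) :
    drlmBackward3Slope f b (p + q) ≤ drlmBackward3Slope f b p + drlmBackward3Slope f b q := by
  have hnn := drlmBackward3Slope_nonneg hf hfb hb
  rcases le_or_gt (p + q) 1 with hc | hc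
  · rcases le_or_gt p f with hpf | hpf
    · have := drlmBackward3Slope_monotoneOn_div_sub hf hfb hb ⟨by linarith, by linarith⟩
        ⟨by linarith, hc⟩ (le_add_of_nonneg_left hp)
      simp only [drlmBackward3Slope_eq_div_f ⟨hp, hpf⟩ (by linarith)] at this ⊢
      rw [add_div] at this
      linarith
    rcases le_or_gt q (1 + f - b) with hqA | hqA
    · rcases le_or_gt (p + q) b with hpqb | hpqb
      · linarith [hnn p, drlmBackward3Slope_antitoneOn_Icc_f_b hf hfb hb
          ⟨hpf.le.trans hpq, by linarith⟩ ⟨by linarith, hpqb⟩ (le_add_of_nonneg_left hp)]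
      · have h₁ := div_one_add_f_le_drlmBackward3Slope ⟨hp, hpq.trans hqA⟩ hf hfb hb
        have h₂ := div_one_add_f_le_drlmBackward3Slope ⟨by linarith, hqA⟩ hf hfb hb
        have h₃ := drlmBackward3Slope_le_div_one_add_f ⟨hpqb.le, hc⟩ hf hfb hb
        rw [add_div] at h₃
        linarith
    · linarith [hnn p, drlmBackward3Slope_antitoneOn_Icc_one_add_f_sub_b_one hf hfb hb
        ⟨hqA.le, hq.le⟩ ⟨by linarith, hc⟩ (le_add_of_nonneg_left hp)]
  · rw [← drlmBackward3Slope_periodic.sub_eq]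
    rcases le_or_gt q (1 + f - b) with hqA | hqA
    · have h₁ := div_one_add_f_le_drlmBackward3Slope ⟨hp, hpq.trans hqA⟩ hf hfb hb
      have h₂ := div_one_add_f_le_drlmBackward3Slope ⟨by linarith, hqA⟩ hf hfb hb
      have h₃ := drlmBackward3Slope_le_one_add_div (t := p + q - 1) ⟨by linarith, by linarith⟩
        hf hfb hb
      rw [show 1 + (p + q - 1) = p + q by ring, add_div] at h₃
      linarith
    · have := drlmBackward3Slope_monotoneOn_sub_negSlope_mul hf hfb hb
        ⟨by linarith, by linarith⟩ ⟨hp, by linarith⟩ (by linarith : p + q - 1 ≤ p)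
      simp only [drlmBackward3Slope_eq_negSlope_mul ⟨hqA.le, hq.le⟩ hf hfb hb] at this ⊢
      linarith

lemma drlmBackward3Slope_add_le (hf : 0 < f) (hfb : f < b) (hb : 2 * b ≤ 1 + f) (x y : ℝ) :
    drlmBackward3Slope f b (x + y) ≤ drlmBackward3Slope f b x + drlmBackward3Slope f b y := by
  have hper := drlmBackward3Slope_periodic (f := f) (b := b)
  have hxy : x + y = Int.fract x + Int.fract y + ((⌊x⌋ + ⌊y⌋ : ℤ) : ℝ) * 1 := by
    push_cast; linarith [Int.fract_add_floor x, Int.fract_add_floor y]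
  rw [hxy, hper.int_mul, ← hper.map_fract x, ← hper.map_fract y]
  rcases le_total (Int.fract x) (Int.fract y) with h | h
  · exact drlmBackward3Slope_add_le_of_le (Int.fract_nonneg _) (Int.fract_lt_one _) h hf hfb hb
  · rw [add_comm (Int.fract x), add_comm (drlmBackward3Slope f b _)]
    exact drlmBackward3Slope_add_le_of_le (Int.fract_nonneg _) (Int.fract_lt_one _) h hf hfb hb

theorem drlmBackward3Slope_minimalValid (hf : 0 < f) (hfb : f < b) (hb : 2 * b ≤ 1 + f) :
    MinimalValid f (drlmBackward3Slope f b) :=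
  ⟨drlmBackward3Slope_nonneg hf hfb hb,
    by rw [drlmBackward3Slope_eq_div_f ⟨le_rfl, hf.le⟩ (by linarith), zero_div],
    drlmBackward3Slope_periodic, drlmBackward3Slope_add_le hf hfb hb,
    drlmBackward3Slope_symm hf hfb hb⟩

lemma drlmBackward3Slope_additiveOnTriangle_zero_f (hf1 : f < 1) :
    AdditiveOnTriangle (drlmBackward3Slope f b) 0 f := fun x y hx hy hxy => by
  rw [drlmBackward3Slope_eq_div_f ⟨hx, by linarith⟩ hf1,
    drlmBackward3Slope_eq_div_f ⟨hy, by linarith⟩ hf1,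
    drlmBackward3Slope_eq_div_f ⟨by linarith, hxy⟩ hf1, add_div]

lemma drlmBackward3Slope_additiveOnTriangle_b (hf : 0 < f) (hfb : f < b) :
    AdditiveOnTriangle (drlmBackward3Slope f b) b (1 + f - b) := fun x y hx hy hxy => by
  rw [drlmBackward3Slope_eq_div_one_add_f ⟨hx, by linarith⟩ hf hfb,
    drlmBackward3Slope_eq_div_one_add_f ⟨hy, by linarith⟩ hf hfb,
    drlmBackward3Slope_eq_div_one_add_f ⟨by linarith, hxy⟩ hf hfb, add_div]

lemma drlmBackward3Slope_neg_eq (hf : 0 < f) (hfb : f < b) (hb : 2 * b ≤ 1 + f) {u : ℝ}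
    (hu : u ∈ Icc 0 (b - f)) : drlmBackward3Slope f b (-u) = -drlmNegSlope f b * u := by
  rw [← drlmBackward3Slope_periodic,
    drlmBackward3Slope_eq_negSlope_mul ⟨by linarith [hu.2], by linarith [hu.1]⟩ hf hfb hb]
  ring

lemma drlmBackward3Slope_additiveOnTriangle_neg (hf : 0 < f) (hfb : f < b) (hb : 2 * b ≤ 1 + f) :
    AdditiveOnTriangle (fun u => drlmBackward3Slope f b (-u)) 0 (b - f) := fun x y hx hy hxy => by
  simp only [drlmBackward3Slope_neg_eq hf hfb hb ⟨hx, by linarith⟩,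
    drlmBackward3Slope_neg_eq hf hfb hb ⟨hy, by linarith⟩,
    drlmBackward3Slope_neg_eq hf hfb hb ⟨by linarith, hxy⟩]
  ring

lemma eq_one_div_one_add_and_eq_neg_drlmNegSlope {σ τ : ℝ} (hf : 0 < f) (hfb : f < b)
    (hσb : σ * b = 1 - τ * (b - f)) (hσA : σ * (1 + f - b) = τ * (b - f)) :
    σ = 1 / (1 + f) ∧ τ = -drlmNegSlope f b := by
  have hσ : σ = 1 / (1 + f) := by
    field_simp
    linarith
  refine ⟨hσ, mul_right_cancel₀ (sub_ne_zero.2 hfb.ne') ?_⟩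
  rw [hσ] at hσA
  linear_combination -hσA - drlmNegSlope_mul_sub hf hfb

theorem MinimalValid.eq_drlmBackward3Slope {φ : ℝ → ℝ} (h : MinimalValid f φ) (hf : 0 < f)
    (hfb : f < b) (hb : 4 * b ≤ 1 + f) (h₁ : AdditiveOnTriangle φ 0 f)
    (h₂ : AdditiveOnTriangle φ b (1 + f - b))
    (h₃ : AdditiveOnTriangle (fun u => φ (-u)) 0 (b - f)) :
    φ = drlmBackward3Slope f b := by
  obtain ⟨hnn, h0, hper, -, hsym⟩ := h
  have hbd : ∀ x, |φ x| ≤ 1 := fun x =>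
    abs_le.2 ⟨by linarith [hnn x], le_one_of_add_apply_sub_eq_one hnn hsym x⟩
  have hφf : φ f = 1 := by simpa [h0] using hsym 0
  have e₁ : ∀ t ∈ Icc 0 f, φ t = t / f := fun t ht => by
    rw [h₁.eq_div_mul hf (fun x _ => hbd x) ht, hφf, one_div_mul_eq_div]
  obtain ⟨σ, e₃⟩ := h₂.exists_eq_mul (C := 1) (by linarith) (by linarith) fun x _ => hbd x
  set τ := φ (-(b - f)) / (b - f)
  have e₄ : ∀ u ∈ Icc 0 (b - f), φ (-u) = τ * u := fun u hu =>
    h₃.eq_div_mul (by linarith) (fun x _ => hbd (-x)) hu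
  have e₂ : ∀ t ∈ Icc f b, φ t = 1 - τ * (t - f) := fun t ht => by
    have := e₄ (t - f) ⟨by linarith [ht.1], by linarith [ht.2]⟩
    rw [neg_sub] at this
    linarith [hsym t]
  -- the pieces overlap at `b` and at `1 + f - b ≡ -(b - f)`, which determines both slopes
  obtain ⟨hσ, hτ⟩ := eq_one_div_one_add_and_eq_neg_drlmNegSlope (σ := σ) (τ := τ) hf hfb
    (by rw [← e₃ b ⟨le_rfl, by linarith⟩, e₂ b ⟨hfb.le, le_rfl⟩])
    (by rw [← e₃ _ ⟨by linarith, le_rfl⟩, ← e₄ (b - f) ⟨by linarith, le_rfl⟩,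
      show 1 + f - b = -(b - f) + 1 by ring, hper])
  refine Periodic.eq_of_eqOn_Ico hper drlmBackward3Slope_periodic fun t ⟨h0, h1⟩ => ?_
  rcases le_or_gt t f with htf | htf
  · rw [e₁ t ⟨h0, htf⟩, drlmBackward3Slope_eq_div_f ⟨h0, htf⟩ (by linarith)]
  rcases le_or_gt t b with htb | htb
  · rw [e₂ t ⟨htf.le, htb⟩, hτ,
      drlmBackward3Slope_eq_one_add_negSlope_mul ⟨htf.le, htb⟩ hf (by linarith)]
    ring
  rcases le_or_gt t (1 + f - b) with htA | htA
  · rw [e₃ t ⟨htb.le, htA⟩, hσ,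
      drlmBackward3Slope_eq_div_one_add_f ⟨htb.le, htA⟩ hf hfb]
    ring
  · have := e₄ (1 - t) ⟨by linarith, by linarith⟩
    rw [neg_sub, Periodic.sub_eq hper] at this
    rw [this, hτ, drlmBackward3Slope_eq_negSlope_mul ⟨htA.le, h1.le⟩ hf hfb (by linarith)]
    ring

theorem MinimalValid.eq_drlmBackward3Slope_of_midpoint {φ₁ φ₂ : ℝ → ℝ}
    (h₁ : MinimalValid f φ₁) (h₂ : MinimalValid f φ₂) (hf : 0 < f) (hfb : f < b)
    (hb : 4 * b ≤ 1 + f)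
    (havg : ∀ x, drlmBackward3Slope f b x = (φ₁ x + φ₂ x) / 2) :
    φ₁ = drlmBackward3Slope f b := by
  have ⟨_, _, _, hsub₁, _⟩ := h₁
  have ⟨_, _, _, hsub₂, _⟩ := h₂
  have hsub_neg : ∀ {φ : ℝ → ℝ}, (∀ x y, φ (x + y) ≤ φ x + φ y) →
      ∀ x y, φ (-(x + y)) ≤ φ (-x) + φ (-y) := fun hsub x y => by
    simpa only [neg_add] using hsub (-x) (-y)
  exact h₁.eq_drlmBackward3Slope hf hfb hb
    ((drlmBackward3Slope_additiveOnTriangle_zero_f (by linarith)).of_midpoint havg hsub₁ hsub₂)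
    ((drlmBackward3Slope_additiveOnTriangle_b hf hfb).of_midpoint havg hsub₁ hsub₂)
    ((drlmBackward3Slope_additiveOnTriangle_neg hf hfb (by linarith)).of_midpoint
      (fun u => havg (-u)) (hsub_neg hsub₁) (hsub_neg hsub₂))

end DrlmBackward3Slope

theorem drlmBackward3Slope_extreme (f b : ℝ) (hf0 : 0 < f) (hfb : f < b)
    (hb : b ≤ (1 + f) / 4) :
    MinimalValid f (drlmBackward3Slope f b) ∧
    ∀ π₁ π₂ : ℝ → ℝ, MinimalValid f π₁ → MinimalValid f π₂ →
      (∀ x, drlmBackward3Slope f b x = (π₁ x + π₂ x) / 2) →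
      π₁ = drlmBackward3Slope f b ∧ π₂ = drlmBackward3Slope f b := by
  refine ⟨drlmBackward3Slope_minimalValid hf0 hfb (by linarith),
    fun π₁ π₂ h₁ h₂ havg => ⟨?_, ?_⟩⟩
  · exact h₁.eq_drlmBackward3Slope_of_midpoint h₂ hf0 hfb (by linarith) havg
  · exact h₂.eq_drlmBackward3Slope_of_midpoint h₁ hf0 hfb (by linarith) fun x => by
      rw [havg, add_comm]
end

section
/- Let f and b be real numbers such that 0 < f < b ≤ (1+f)/4, and let π : ℝ → ℝ be the drlm_backward_3_slope function. Then π is a minimal valid function with parameter f; in particular π is nonnegative, π(0) = 0, π is periodic with period 1, π is subadditive, and π(x) + π(f−x) = 1 for all x ∈ ℝ. -/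
/-!
On `[0, 1)` the function is piecewise linear with breakpoints `f`, `b`, `1 + f - b`, and
clearing denominators makes its pieces polynomial in the point and the parameters. Since
`fract (x + y)` is `fract x + fract y` or that minus `1`, subadditivity reduces to finitely many
polynomial inequalities between pieces, each a consequence of `0 < f < b` and `4 * b ≤ 1 + f`.
Symmetry pairs `[0, f]` with itself, `[f, b]` with `[1 + f - b, 1]`, and `[b, 1 + f - b]` with
itself.
-/

namespace Int

variable {R : Type*} [CommRing R] [LinearOrder R] [IsStrictOrderedRing R] [FloorRing R]

theorem fract_add_eq_or (a b : R) :
    fract (a + b) = fract a + fract b ∨ fract (a + b) = fract a + fract b - 1 := by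
  obtain ⟨z, hz⟩ := fract_add a b
  have hle : (z : R) ≤ 0 := by rw [← hz]; linarith [fract_add_le a b]
  have hge : (-1 : R) ≤ z := by rw [← hz]; linarith [fract_add_fract_le a b]
  obtain rfl | rfl : z = 0 ∨ z = -1 := by
    have : z ≤ 0 := by exact_mod_cast hle
    have : -1 ≤ z := by exact_mod_cast hge
    omega
  · left; push_cast at hz; linear_combination hz
  · right; push_cast at hz; linear_combination hz

theorem fract_sub_eq_of_fract_le {a x : R} (ha : a < 1) (h : fract x ≤ a) :
    fract (a - x) = a - fract x :=
  fract_eq_iff.2 ⟨by linarith, by linarith [fract_nonneg x], -⌊x⌋, by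
    rw [← self_sub_floor]; push_cast; ring⟩

theorem fract_sub_eq_of_lt_fract {a x : R} (ha : 0 ≤ a) (h : a < fract x) :
    fract (a - x) = 1 + a - fract x :=
  fract_eq_iff.2 ⟨by linarith [fract_lt_one x], by linarith, -⌊x⌋ - 1, by
    rw [← self_sub_floor]; push_cast; ring⟩

variable {φ : R → R}

theorem comp_fract_add_le
    (h₁ : ∀ s t, 0 ≤ s → 0 ≤ t → s + t < 1 → φ (s + t) ≤ φ s + φ t)
    (h₂ : ∀ s t, s < 1 → t < 1 → 1 ≤ s + t → φ (s + t - 1) ≤ φ s + φ t) (x y : R) :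
    φ (fract (x + y)) ≤ φ (fract x) + φ (fract y) := by
  rcases fract_add_eq_or x y with h | h <;> rw [h]
  · exact h₁ _ _ (fract_nonneg x) (fract_nonneg y) (h ▸ fract_lt_one (x + y))
  · exact h₂ _ _ (fract_lt_one x) (fract_lt_one y) (by linarith [fract_nonneg (x + y)])

theorem comp_fract_add_comp_fract_sub {a c : R} (ha : 0 ≤ a) (ha1 : a < 1)
    (h₁ : ∀ s, 0 ≤ s → s ≤ a → φ s + φ (a - s) = c)
    (h₂ : ∀ s, a < s → s < 1 → φ s + φ (1 + a - s) = c) (x : R) :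
    φ (fract x) + φ (fract (a - x)) = c := by
  rcases le_or_gt (fract x) a with h | h
  · rw [fract_sub_eq_of_fract_le ha1 h]
    exact h₁ _ (fract_nonneg x) h
  · rw [fract_sub_eq_of_lt_fract ha h]
    exact h₂ _ h (fract_lt_one x)

end Int

/-- `drlmBackward3Slope f b` on `[0, 1)`, multiplied by `f * (1 + f) * (b - f)`. -/
noncomputable def drlmScaled (f b t : ℝ) : ℝ :=
  if t ≤ f then (1 + f) * (b - f) * t
  else if t ≤ b then f * b - f * (1 + f - b) * t
  else if t ≤ 1 + f - b then f * (b - f) * t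
  else f * (1 + f - b) * (1 - t)

section DrlmScaled

variable {f b s t : ℝ}

theorem drlmScaled_of_le_f (h : t ≤ f) : drlmScaled f b t = (1 + f) * (b - f) * t := by
  simp [drlmScaled, h]

theorem drlmScaled_of_mem_Icc_f_b (h : t ∈ Set.Icc f b) :
    drlmScaled f b t = f * b - f * (1 + f - b) * t := by
  obtain ⟨h₁, h₂⟩ := h
  unfold drlmScaled
  split_ifs with h
  · rw [le_antisymm h h₁]; ring
  · rfl

theorem drlmScaled_of_mem_Icc_b (hfb : f < b) (h : t ∈ Set.Icc b (1 + f - b)) :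
    drlmScaled f b t = f * (b - f) * t := by
  obtain ⟨h₁, h₂⟩ := h
  unfold drlmScaled
  rw [if_neg (by linarith)]
  split_ifs with h
  · rw [le_antisymm h h₁]; ring
  · rfl

theorem drlmScaled_of_ge (hfb : f < b) (hb : 2 * b < 1 + f) (h : 1 + f - b ≤ t) :
    drlmScaled f b t = f * (1 + f - b) * (1 - t) := by
  unfold drlmScaled
  rw [if_neg (by linarith), if_neg (by linarith)]
  split_ifs with h'
  · rw [le_antisymm h' h]; ring
  · rfl

theorem drlmScaled_nonneg (hf : 0 ≤ f) (hfb : f ≤ b) (hb : b ≤ 1 + f) (h₀ : 0 ≤ t)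
    (h₁ : t < 1) : 0 ≤ drlmScaled f b t := by
  have hbf : 0 ≤ b - f := by linarith
  have hfb' : 0 ≤ 1 + f - b := by linarith
  unfold drlmScaled
  split_ifs with h₂ h₃ h₄
  · exact mul_nonneg (mul_nonneg (by linarith) hbf) h₀
  · rw [show f * b - f * (1 + f - b) * t = f * (1 + f - b) * (b - t) + f * b * (b - f) by ring]
    exact add_nonneg (mul_nonneg (mul_nonneg hf hfb') (sub_nonneg.2 h₃))
      (mul_nonneg (mul_nonneg hf (hf.trans hfb)) hbf)
  · exact mul_nonneg (mul_nonneg hf hbf) h₀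
  · exact mul_nonneg (mul_nonneg hf hfb') (by linarith)

theorem drlmScaled_add_le (hf : 0 < f) (hfb : f < b) (hb : 4 * b ≤ 1 + f)
    (hs : 0 ≤ s) (ht : 0 ≤ t) (hst : s + t < 1) :
    drlmScaled f b (s + t) ≤ drlmScaled f b s + drlmScaled f b t := by
  unfold drlmScaled
  split_ifs <;> nlinarith [mul_pos hf (sub_pos.2 hfb)]

theorem drlmScaled_add_sub_one_le (hf : 0 < f) (hfb : f < b) (hb : 4 * b ≤ 1 + f)
    (hs : s < 1) (ht : t < 1) (hst : 1 ≤ s + t) :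
    drlmScaled f b (s + t - 1) ≤ drlmScaled f b s + drlmScaled f b t := by
  unfold drlmScaled
  split_ifs <;> nlinarith [mul_pos hf (sub_pos.2 hfb)]

theorem drlmScaled_add_drlmScaled_sub (hs : 0 ≤ s) (h : s ≤ f) :
    drlmScaled f b s + drlmScaled f b (f - s) = f * (1 + f) * (b - f) := by
  rw [drlmScaled_of_le_f h, drlmScaled_of_le_f (by linarith)]
  ring

theorem drlmScaled_add_drlmScaled_one_add_sub (hfb : f < b) (hb : 2 * b < 1 + f)
    (h₁ : f < s) (h₂ : s < 1) :
    drlmScaled f b s + drlmScaled f b (1 + f - s) = f * (1 + f) * (b - f) := by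
  rcases le_or_gt s b with hsb | hsb
  · rw [drlmScaled_of_mem_Icc_f_b ⟨h₁.le, hsb⟩, drlmScaled_of_ge hfb hb (by linarith)]
    ring
  rcases le_or_gt s (1 + f - b) with hsb' | hsb'
  · rw [drlmScaled_of_mem_Icc_b hfb ⟨hsb.le, hsb'⟩,
      drlmScaled_of_mem_Icc_b hfb ⟨by linarith, by linarith⟩]
    ring
  · rw [drlmScaled_of_ge hfb hb hsb'.le, drlmScaled_of_mem_Icc_f_b ⟨by linarith, by linarith⟩]
    ring

end DrlmScaled

theorem drlmBackward3Slope_eq {f b : ℝ} (hf : 0 < f) (hfb : f < b) (x : ℝ) :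
    drlmBackward3Slope f b x = drlmScaled f b (Int.fract x) / (f * (1 + f) * (b - f)) := by
  have : b - f ≠ 0 := by linarith
  have : f - b ≠ 0 := by linarith
  simp only [drlmBackward3Slope, drlmScaled]
  split_ifs <;> field_simp <;> ring

theorem drlmBackward3Slope_minimal (f b : ℝ) (hf0 : 0 < f) (hfb : f < b)
    (hb : b ≤ (1 + f) / 4) :
    MinimalValid f (drlmBackward3Slope f b) ∧
    (∀ x, 0 ≤ drlmBackward3Slope f b x) ∧
    drlmBackward3Slope f b 0 = 0 ∧
    (∀ x, drlmBackward3Slope f b (x + 1) = drlmBackward3Slope f b x) ∧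
    (∀ x y, drlmBackward3Slope f b (x + y) ≤
      drlmBackward3Slope f b x + drlmBackward3Slope f b y) ∧
    (∀ x, drlmBackward3Slope f b x + drlmBackward3Slope f b (f - x) = 1) := by
  have hb4 : 4 * b ≤ 1 + f := by linarith
  have hD : 0 < f * (1 + f) * (b - f) := by
    have := sub_pos.2 hfb
    positivity
  have heq := drlmBackward3Slope_eq hf0 hfb
  have nonneg (x : ℝ) : 0 ≤ drlmBackward3Slope f b x := by
    rw [heq]
    exact div_nonneg (drlmScaled_nonneg hf0.le hfb.le (by linarith) (Int.fract_nonneg x)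
      (Int.fract_lt_one x)) hD.le
  have zero : drlmBackward3Slope f b 0 = 0 := by
    rw [heq, Int.fract_zero, drlmScaled_of_le_f hf0.le, mul_zero, zero_div]
  have periodic (x : ℝ) : drlmBackward3Slope f b (x + 1) = drlmBackward3Slope f b x := by
    rw [heq, heq, Int.fract_add_one]
  have subadditive (x y : ℝ) : drlmBackward3Slope f b (x + y) ≤
      drlmBackward3Slope f b x + drlmBackward3Slope f b y := by
    rw [heq, heq, heq, ← add_div]
    exact div_le_div_of_nonneg_right (Int.comp_fract_add_le
      (fun _ _ => drlmScaled_add_le hf0 hfb hb4)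
      (fun _ _ => drlmScaled_add_sub_one_le hf0 hfb hb4) x y) hD.le
  have symmetric (x : ℝ) : drlmBackward3Slope f b x + drlmBackward3Slope f b (f - x) = 1 := by
    rw [heq, heq, ← add_div, div_eq_one_iff_eq hD.ne']
    exact Int.comp_fract_add_comp_fract_sub hf0.le (by linarith)
      (fun _ => drlmScaled_add_drlmScaled_sub)
      (fun _ => drlmScaled_add_drlmScaled_one_add_sub hfb (by linarith)) x
  exact ⟨⟨nonneg, zero, periodic, subadditive, symmetric⟩,
    nonneg, zero, periodic, subadditive, symmetric⟩
end

section
/- Let f and b be real numbers such that 0 < f < b ≤ (1+f)/4, and let π : ℝ → ℝ be the drlm_backward_3_slope function. Then for all x, y ∈ ℝ with 0 ≤ x ≤ f, 0 ≤ y ≤ f, and 0 ≤ x + y ≤ f, the additivity relation π(x) + π(y) = π(x+y) holds. -/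
theorem drlmBackward3Slope_eq_div_of_mem_Icc {f b t : ℝ} (hf1 : f < 1) (ht0 : 0 ≤ t)
    (htf : t ≤ f) : drlmBackward3Slope f b t = t / f := by
  have hfract : Int.fract t = t := Int.fract_eq_self.2 ⟨ht0, htf.trans_lt hf1⟩
  simp only [drlmBackward3Slope, hfract, if_pos htf]

theorem drlmBackward3Slope_additive_F1_general (f b : ℝ) (hfb : f < b)
    (hb : b ≤ (1 + f) / 4)
    (x y : ℝ) (hx0 : 0 ≤ x) (hxf : x ≤ f) (hy0 : 0 ≤ y) (hyf : y ≤ f)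
    (hxyf : x + y ≤ f) :
    drlmBackward3Slope f b x + drlmBackward3Slope f b y
      = drlmBackward3Slope f b (x + y) := by
  have hf1 : f < 1 := by linarith
  rw [drlmBackward3Slope_eq_div_of_mem_Icc hf1 hx0 hxf,
    drlmBackward3Slope_eq_div_of_mem_Icc hf1 hy0 hyf,
    drlmBackward3Slope_eq_div_of_mem_Icc hf1 (add_nonneg hx0 hy0) hxyf, add_div]

theorem drlmBackward3Slope_additive_F1 (f b : ℝ) (hf0 : 0 < f) (hfb : f < b)
    (hb : b ≤ (1 + f) / 4)
    (x y : ℝ) (hx0 : 0 ≤ x) (hxf : x ≤ f) (hy0 : 0 ≤ y) (hyf : y ≤ f)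
    (hxy0 : 0 ≤ x + y) (hxyf : x + y ≤ f) :
    drlmBackward3Slope f b x + drlmBackward3Slope f b y
      = drlmBackward3Slope f b (x + y) :=
  drlmBackward3Slope_additive_F1_general f b hfb hb x y hx0 hxf hy0 hyf hxyf
end

section
/- Let f and b be real numbers such that 0 < f < b ≤ (1+f)/4, and let π : ℝ → ℝ be the drlm_backward_3_slope function. Then for all x, y ∈ ℝ with f ≤ x ≤ b, 1+f−b ≤ y ≤ 1, and 1+f ≤ x + y ≤ 1+b, the additivity relation π(x) + π(y) = π(x+y) holds. -/
/-! The additivity comes from the two negative-slope pieces sharing the slope `s = negSlope f b`: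
on `[f, b]` the function is `1 + s (x - f)`, on `[1 + f - b, 1]` it is `s (y - 1)`, and
adding them gives `1 + s ((x + y - 1) - f)`, which is `π (x + y - 1) = π (x + y)`. -/

namespace drlmBackward3Slope

noncomputable def negSlope (f b : ℝ) : ℝ := (1 + f - b) / ((1 + f) * (f - b))

theorem add_one (f b x : ℝ) :
    drlmBackward3Slope f b (x + 1) = drlmBackward3Slope f b x := by
  simp only [drlmBackward3Slope, Int.fract_add_one]

theorem eq_on_second_piece {f b x : ℝ} (hf0 : 0 < f) (hb1 : b < 1)
    (hx : x ∈ Set.Icc f b) :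
    drlmBackward3Slope f b x = 1 + negSlope f b * (x - f) := by
  obtain ⟨hxl, hxu⟩ := hx
  have hfract : Int.fract x = x := Int.fract_eq_self.2 ⟨by linarith, by linarith⟩
  simp only [drlmBackward3Slope, hfract, negSlope]
  split_ifs with hxf
  · obtain rfl : x = f := le_antisymm hxf hxl
    rw [sub_self, mul_zero, add_zero, div_self hf0.ne']
  · ring

theorem eq_on_last_piece {f b y : ℝ} (hf0 : 0 < f) (hfb : f < b) (hb : 2 * b < 1 + f)
    (hy : y ∈ Set.Icc (1 + f - b) 1) :
    drlmBackward3Slope f b y = negSlope f b * (y - 1) := by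
  obtain ⟨hyl, hyu⟩ := hy
  rcases hyu.eq_or_lt with rfl | hy1
  · simp [drlmBackward3Slope, hf0.le]
  have hfract : Int.fract y = y := Int.fract_eq_self.2 ⟨by linarith, hy1⟩
  simp only [drlmBackward3Slope, hfract, negSlope]
  rw [if_neg (by linarith), if_neg (by linarith)]
  split_ifs with hy
  · obtain rfl : y = 1 + f - b := le_antisymm hy hyl
    have : f - b ≠ 0 := sub_ne_zero.2 hfb.ne
    field_simp
    ring
  · ring

end drlmBackward3Slope

theorem drlmBackward3Slope_additive_F2_general (f b : ℝ) (hf0 : 0 < f) (hfb : f < b)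
    (hb : b ≤ (1 + f) / 4)
    (x y : ℝ) (hxl : f ≤ x) (hxu : x ≤ b)
    (hyl : 1 + f - b ≤ y) (hyu : y ≤ 1)
    (hxyl : 1 + f ≤ x + y) :
    drlmBackward3Slope f b x + drlmBackward3Slope f b y
      = drlmBackward3Slope f b (x + y) := by
  have hb1 : b < 1 := by linarith
  have hb2 : 2 * b < 1 + f := by linarith
  rw [← sub_add_cancel (x + y) 1, drlmBackward3Slope.add_one,
    drlmBackward3Slope.eq_on_second_piece hf0 hb1 ⟨hxl, hxu⟩,
    drlmBackward3Slope.eq_on_last_piece hf0 hfb hb2 ⟨hyl, hyu⟩,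
    drlmBackward3Slope.eq_on_second_piece hf0 hb1 ⟨by linarith, by linarith⟩]
  ring

theorem drlmBackward3Slope_additive_F2 (f b : ℝ) (hf0 : 0 < f) (hfb : f < b)
    (hb : b ≤ (1 + f) / 4)
    (x y : ℝ) (hxl : f ≤ x) (hxu : x ≤ b)
    (hyl : 1 + f - b ≤ y) (hyu : y ≤ 1)
    (hxyl : 1 + f ≤ x + y) (hxyu : x + y ≤ 1 + b) :
    drlmBackward3Slope f b x + drlmBackward3Slope f b y
      = drlmBackward3Slope f b (x + y) :=
  drlmBackward3Slope_additive_F2_general f b hf0 hfb hb x y hxl hxu hyl hyu hxyl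
end

section
/- Let f ∈ (0,1) and let (π_n) be a sequence of minimal valid functions with parameter f that converges pointwise to a function π : ℝ → ℝ. Then π is a minimal valid function with parameter f. -/
/-- Each condition is a non-strict (in)equality between finitely many values of `π`, so it is
closed in the product topology, i.e. under pointwise convergence. -/
theorem isClosed_setOf_minimalValid (f : ℝ) : IsClosed {π : ℝ → ℝ | MinimalValid f π} := by
  simp only [MinimalValid, Set.ofPred_and, Set.ofPred_forall]
  refine .inter (isClosed_iInter fun x => isClosed_le continuous_const (continuous_apply x)) <|
    .inter (isClosed_eq (continuous_apply 0) continuous_const) <|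
    .inter (isClosed_iInter fun x => isClosed_eq (continuous_apply _) (continuous_apply x)) <|
    .inter (isClosed_iInter fun x => isClosed_iInter fun y =>
      isClosed_le (continuous_apply _) ((continuous_apply x).add (continuous_apply y))) <|
    isClosed_iInter fun x =>
      isClosed_eq ((continuous_apply x).add (continuous_apply (f - x))) continuous_const

theorem minimalValid_of_pointwise_limit_general (f : ℝ)
    (πseq : ℕ → ℝ → ℝ) (hmin : ∀ n, MinimalValid f (πseq n))
    (π : ℝ → ℝ)
    (hlim : ∀ x, Filter.Tendsto (fun n => πseq n x) Filter.atTop (nhds (π x))) :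
    MinimalValid f π :=
  (isClosed_setOf_minimalValid f).mem_of_tendsto (tendsto_pi_nhds.2 hlim)
    (Filter.Eventually.of_forall hmin)

/-- Pointwise limits of minimal valid functions are minimal valid. -/
theorem minimalValid_of_pointwise_limit (f : ℝ) (hf0 : 0 < f) (hf1 : f < 1)
    (πseq : ℕ → ℝ → ℝ) (hmin : ∀ n, MinimalValid f (πseq n))
    (π : ℝ → ℝ)
    (hlim : ∀ x, Filter.Tendsto (fun n => πseq n x) Filter.atTop (nhds (π x))) :
    MinimalValid f π :=
  minimalValid_of_pointwise_limit_general f πseq hmin π hlim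
end
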